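/- Define C(m) = (1+b)^{−1} b^{[m]} (b + ([m] − m + 1/2)(1−b)) for b ∈ (0,1), where [m] is the nearest integer to m. Then C is positive, continuous, and monotone decreasing on ℝ. -/
import Mathlib


open Real

/-- The function `C(m) = (1+b)⁻¹ b^[m] (b + ([m] - m + 1/2)(1-b))` from the paper,
where `[m]` is the nearest integer to `m`. -/
noncomputable def tulapC (b : ℝ) (m : ℝ) : ℝ :=
  (1 + b)⁻¹ * b ^ (round m) * (b + ((round m : ℝ) - m + 1/2) * (1 - b))

lemma round_sub_bounds (m : ℝ) :
    -(1/2) ≤ (round m : ℝ) - m ∧ (round m : ℝ) - m ≤ 1/2 := by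
  have h := abs_sub_round m
  rw [abs_le] at h
  constructor <;> linarith [h.1, h.2]

lemma tulapC_eq_fract (b : ℝ) (hb0 : 0 < b) (m : ℝ) :
    tulapC b m = (1 + b)⁻¹ *
      (b ^ (m + 1/2) *
        (b ^ (-Int.fract (m + 1/2)) * (1 - Int.fract (m + 1/2) * (1 - b)))) := by
  have hround : round m = ⌊m + 1/2⌋ := round_eq m
  have hfr : Int.fract (m + 1/2) = m + 1/2 - (⌊m + 1/2⌋ : ℝ) := (Int.self_sub_floor _).symm
  have hpow : b ^ (m + 1/2) * b ^ (-Int.fract (m + 1/2)) = (b : ℝ) ^ (⌊m + 1/2⌋ : ℤ) := by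
    rw [← Real.rpow_add hb0, ← Real.rpow_intCast]
    congr 1
    rw [hfr]; ring
  rw [tulapC, hround]
  have : b ^ (m + 1/2) * (b ^ (-Int.fract (m + 1/2)) * (1 - Int.fract (m + 1/2) * (1 - b)))
      = (b : ℝ) ^ (⌊m + 1/2⌋ : ℤ) * (1 - Int.fract (m + 1/2) * (1 - b)) := by
    rw [← hpow]; ring
  rw [this, hfr]
  ring

/-- for `b ∈ (0,1)`, `C` is positive, continuous, and monotone
decreasing on ℝ. -/
theorem tulapC_pos_continuous_antitone (b : ℝ) (hb : b ∈ Set.Ioo (0:ℝ) 1) :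
    (∀ m : ℝ, 0 < tulapC b m) ∧ Continuous (tulapC b) ∧ Antitone (tulapC b) := by
  obtain ⟨hb0, hb1⟩ := hb
  have hbne : b ≠ 0 := ne_of_gt hb0
  have hc : (0:ℝ) < (1 + b)⁻¹ := by positivity
  -- factor bounds
  have hfac_lb : ∀ m : ℝ, b ≤ b + ((round m : ℝ) - m + 1/2) * (1 - b) := by
    intro m
    have h := (round_sub_bounds m).1
    nlinarith
  have hfac_ub : ∀ m : ℝ, b + ((round m : ℝ) - m + 1/2) * (1 - b) ≤ 1 := by
    intro m
    have h := (round_sub_bounds m).2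
    nlinarith
  have hzpow_pos : ∀ k : ℤ, (0:ℝ) < b ^ k := fun k => zpow_pos hb0 k
  have hpos : ∀ m : ℝ, 0 < tulapC b m := by
    intro m
    have := hfac_lb m
    have := hzpow_pos (round m)
    have : 0 < b + ((round m : ℝ) - m + 1/2) * (1 - b) := lt_of_lt_of_le hb0 (hfac_lb m)
    unfold tulapC
    positivity
  -- bounds on tulapC
  have hub : ∀ m : ℝ, tulapC b m ≤ (1 + b)⁻¹ * b ^ (round m) := by
    intro m
    have h1 := hfac_ub m
    have h2 := hzpow_pos (round m)
    calc tulapC b m ≤ (1 + b)⁻¹ * b ^ (round m) * 1 := by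
          unfold tulapC
          apply mul_le_mul_of_nonneg_left h1
          positivity
      _ = (1 + b)⁻¹ * b ^ (round m) := by ring
  have hlb : ∀ m : ℝ, (1 + b)⁻¹ * b ^ (round m + 1) ≤ tulapC b m := by
    intro m
    have h1 := hfac_lb m
    have h2 := hzpow_pos (round m)
    have : (b:ℝ) ^ (round m + 1) = b ^ (round m) * b := by
      rw [zpow_add_one₀ hbne]
    rw [this]
    calc (1 + b)⁻¹ * (b ^ (round m) * b) = (1 + b)⁻¹ * b ^ (round m) * b := by ring
      _ ≤ (1 + b)⁻¹ * b ^ (round m) * (b + ((round m : ℝ) - m + 1/2) * (1 - b)) := by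
          apply mul_le_mul_of_nonneg_left h1
          positivity
      _ = tulapC b m := rfl
  refine ⟨hpos, ?_, ?_⟩
  · -- continuity
    have key : ∀ m : ℝ, tulapC b m = (1 + b)⁻¹ *
        (b ^ (m + 1/2) *
          (b ^ (-Int.fract (m + 1/2)) * (1 - Int.fract (m + 1/2) * (1 - b)))) :=
      tulapC_eq_fract b hb0
    rw [show tulapC b = fun m => (1 + b)⁻¹ *
        (b ^ (m + 1/2) *
          (b ^ (-Int.fract (m + 1/2)) * (1 - Int.fract (m + 1/2) * (1 - b)))) from
      funext key]
    apply Continuous.mul continuous_const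
    apply Continuous.mul
    · exact (continuous_const.rpow (continuous_id.add continuous_const)
        (fun x => Or.inl hbne))
    · -- composition with fract
      have hcf : Continuous fun t : ℝ =>
          b ^ (-Int.fract t) * (1 - Int.fract t * (1 - b)) := by
        apply ContinuousOn.comp_fract'' (f := fun t : ℝ => b ^ (-t) * (1 - t * (1 - b)))
        · apply ContinuousOn.mul
          · exact (Continuous.rpow continuous_const continuous_neg
              (fun x => Or.inl hbne)).continuousOn
          · fun_prop
        · simp [Real.rpow_neg_one, hbne]
      exact hcf.comp (continuous_id.add continuous_const)
  · -- antitone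
    intro x y hxy
    have hmono : round x ≤ round y := by rw [round_eq, round_eq]; exact Int.floor_mono (by linarith)
    rcases eq_or_lt_of_le hmono with heq | hlt
    · -- same round
      unfold tulapC
      rw [heq]
      have h2 := hzpow_pos (round y)
      have hnn : 0 ≤ (1 + b)⁻¹ * b ^ (round y) := by positivity
      apply mul_le_mul_of_nonneg_left _ hnn
      nlinarith
    · -- round x < round y
      have h1 : tulapC b y ≤ (1 + b)⁻¹ * b ^ (round y) := hub y
      have h2 : (1 + b)⁻¹ * b ^ (round x + 1) ≤ tulapC b x := hlb x
      have h3 : (b:ℝ) ^ (round y) ≤ b ^ (round x + 1) :=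
        zpow_le_zpow_right_of_le_one₀ hb0 (le_of_lt hb1) hlt
      have h4 : (1 + b)⁻¹ * b ^ (round y) ≤ (1 + b)⁻¹ * b ^ (round x + 1) :=
        mul_le_mul_of_nonneg_left h3 (le_of_lt hc)
      linarith
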